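/- arXiv:1607.05610 — 5 statements merged into one kernel-verified Lean document; each statement's English description precedes it below -/
import Mathlib

section
/- If I and J are two non-isomorphic maximal ideals on ω, then the ideal I ⊕ J on {0,1}×ω satisfies condition (C1): every bi-(I⊕J)-invariant injection f : {0,1}×ω → {0,1}×ω has fix(f) ∈ (I⊕J)*. -/
open Set Filter

/-- `I` is an ideal on the countable set `X`: closed under subsets and finite
unions, contains all finite sets, and does not contain the whole set. -/
def IsIdeal {X : Type*} (I : Set (Set X)) : Prop :=
  (∀ A B : Set X, A ∈ I → B ⊆ A → B ∈ I) ∧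
  (∀ A B : Set X, A ∈ I → B ∈ I → A ∪ B ∈ I) ∧
  (∀ A : Set X, A.Finite → A ∈ I) ∧
  (Set.univ : Set X) ∉ I

/-- The restriction `I|A = {B ∩ A : B ∈ I}`. -/
def restr {X : Type*} (I : Set (Set X)) (A : Set X) : Set (Set X) :=
  {C | ∃ B ∈ I, C = B ∩ A}

/-- `I|A ≅ I|B`: there is a bijection `f : B → A` such that for every
`C ⊆ A`, `C ∈ I|A ↔ f⁻¹[C] ∈ I|B`. -/
def RIso {X : Type*} (I : Set (Set X)) (A B : Set X) : Prop :=
  ∃ f : X → X, Set.BijOn f B A ∧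
    ∀ C : Set X, C ⊆ A → (C ∈ restr I A ↔ B ∩ f ⁻¹' C ∈ restr I B)

/-- The homogeneity family `H(I) = {A : I|A ≅ I}`. -/
def HF {X : Type*} (I : Set (Set X)) : Set (Set X) := {A | RIso I A Set.univ}

/-- `I` is homogeneous if `H(I) = I⁺`. -/
def HomogIdeal {X : Type*} (I : Set (Set X)) : Prop := HF I = {A | A ∉ I}

/-- `I` is anti-homogeneous if `H(I) = I*`. -/
def AntiHomogIdeal {X : Type*} (I : Set (Set X)) : Prop := HF I = {A | Aᶜ ∈ I}

/-- `I ≅ J`: a bijection `f` of underlying sets with `A ∈ I ↔ f⁻¹[A] ∈ J`. -/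
def Isomorphic {X Y : Type*} (I : Set (Set X)) (J : Set (Set Y)) : Prop :=
  ∃ f : Y → X, Function.Bijective f ∧ ∀ A : Set X, A ∈ I ↔ f ⁻¹' A ∈ J

/-- The ideal `Fin ⊕ P(ω)` on `{0,1} × ω` (here `Bool × ℕ`, `true` playing the
role of `1`): all sets `A` with `{n : (1,n) ∈ A}` finite. -/
def FinOplusAll : Set (Set (Bool × ℕ)) := {A | {n : ℕ | (true, n) ∈ A}.Finite}

/-- An ideal on `ω` is admissible if it is not isomorphic to `Fin ⊕ P(ω)`. -/
def Admissible (I : Set (Set ℕ)) : Prop := ¬ Isomorphic I FinOplusAll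

/-- An injection `f` is bi-`I`-invariant if `f[A] ∈ I ↔ A ∈ I` for all `A`. -/
def BiInvariant {X : Type*} (I : Set (Set X)) (f : X → X) : Prop :=
  Function.Injective f ∧ ∀ A : Set X, f '' A ∈ I ↔ A ∈ I

/-- The set of fixed points of `f`. -/
def fixedSet {X : Type*} (f : X → X) : Set X := {x | f x = x}

/-- `I` is a maximal ideal. -/
def MaximalIdeal {X : Type*} (I : Set (Set X)) : Prop :=
  IsIdeal I ∧ ∀ A : Set X, A ∈ I ∨ Aᶜ ∈ I

/-- The ideal `I ⊕ J` on `{0,1} × ω` (here `Bool × ℕ`, `false` playing the role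
of `0` and `true` of `1`). -/
def oplus (I J : Set (Set ℕ)) : Set (Set (Bool × ℕ)) :=
  {A | {n : ℕ | (false, n) ∈ A} ∈ I ∧ {n : ℕ | (true, n) ∈ A} ∈ J}


/-!
Suppose the points of `{0} × ω` moved by `f` form an `I`-positive set. Since `f` is injective,
every point has at most two `f`-neighbours, so a greedy colouring along an enumeration gives three
colours with `x` and `f x` always coloured differently. By maximality some colour class `Q` is
`I`-positive, and `f` maps `{0} × Q` off itself. As `{0} × Qᶜ` is `(I ⊕ J)`-small, bi-invariance
sends `I`-almost all of `{0} × Q` into `{1} × ω`, injectively and carrying `I` onto `J`. For maximal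
ideals such a partial isomorphism between positive sets extends to a full one (after trimming an
infinite small piece, both complements are infinite and small), contradicting `I ≇ J`. The side
`{1} × ω` is the same argument with the two sides swapped.
-/

open Function

namespace IsIdeal

variable {X : Type*} {I : Set (Set X)}

theorem mem_of_subset (hI : IsIdeal I) {A B : Set X} (hA : A ∈ I) (hBA : B ⊆ A) : B ∈ I :=
  hI.1 A B hA hBA

theorem union_mem (hI : IsIdeal I) {A B : Set X} (hA : A ∈ I) (hB : B ∈ I) : A ∪ B ∈ I :=
  hI.2.1 A B hA hB

theorem finite_mem (hI : IsIdeal I) {A : Set X} (hA : A.Finite) : A ∈ I :=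
  hI.2.2.1 A hA

theorem univ_notMem (hI : IsIdeal I) : (univ : Set X) ∉ I :=
  hI.2.2.2

theorem empty_mem (hI : IsIdeal I) : (∅ : Set X) ∈ I :=
  hI.finite_mem finite_empty

theorem union_mem_iff (hI : IsIdeal I) {A B : Set X} (hB : B ∈ I) : A ∪ B ∈ I ↔ A ∈ I :=
  ⟨fun h => hI.mem_of_subset h subset_union_left, fun h => hI.union_mem h hB⟩

theorem inter_mem_iff (hI : IsIdeal I) {A C : Set X} (hC : Cᶜ ∈ I) : A ∩ C ∈ I ↔ A ∈ I := by
  rw [← hI.union_mem_iff (B := A \ C) (hI.mem_of_subset hC fun _ hx => hx.2), inter_union_sdiff]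

theorem biUnion_mem (hI : IsIdeal I) {ι : Type*} {A : ι → Set X} (s : Finset ι)
    (h : ∀ i ∈ s, A i ∈ I) : ⋃ i ∈ s, A i ∈ I := by
  classical
  induction s using Finset.induction_on with
  | empty => simpa using hI.empty_mem
  | insert i s _ ih =>
    rw [Finset.set_biUnion_insert]
    exact hI.union_mem (h i (Finset.mem_insert_self i s))
      (ih fun j hj => h j (Finset.mem_insert_of_mem hj))

theorem exists_notMem_of_subset_iUnion (hI : IsIdeal I) {ι : Type*} [Finite ι] {A : ι → Set X}
    {D : Set X} (hD : D ∉ I) (hDA : D ⊆ ⋃ i, A i) : ∃ i, A i ∉ I := by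
  have := Fintype.ofFinite ι
  by_contra! h
  exact hD (hI.mem_of_subset (by simpa using hI.biUnion_mem Finset.univ fun i _ => h i) hDA)

end IsIdeal

namespace MaximalIdeal

variable {X : Type*} {I : Set (Set X)}

theorem compl_mem (hI : MaximalIdeal I) {A : Set X} (hA : A ∉ I) : Aᶜ ∈ I :=
  (hI.2 A).resolve_left hA

theorem exists_infinite_subset_mem (hI : MaximalIdeal I) {A : Set X} (hA : A ∉ I) :
    ∃ S ⊆ A, S.Infinite ∧ S ∈ I := by
  have hAinf : A.Infinite := fun h => hA (hI.1.finite_mem h)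
  obtain ⟨S, T, rfl, hST, hcard⟩ := hAinf.exists_union_disjoint_cardinal_eq_of_infinite
  have hinf : S.Infinite ∧ T.Infinite := by
    obtain ⟨e⟩ := Cardinal.eq.mp hcard
    have := e.infinite_iff
    rcases infinite_union.mp hAinf with h | h
    · exact ⟨h, infinite_coe_iff.mp (this.mp h.to_subtype)⟩
    · exact ⟨infinite_coe_iff.mp (this.mpr h.to_subtype), h⟩
  by_cases hS : S ∈ I
  · exact ⟨S, subset_union_left, hinf.1, hS⟩
  by_cases hT : T ∈ I
  · exact ⟨T, subset_union_right, hinf.2, hT⟩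
  refine absurd (hI.1.union_mem (hI.compl_mem hS) (hI.compl_mem hT)) ?_
  rw [← compl_inter, hST.inter_eq, compl_empty]
  exact hI.1.univ_notMem

end MaximalIdeal

def otherColor (a b : Fin 3) : Fin 3 :=
  if 0 ≠ a ∧ 0 ≠ b then 0 else if 1 ≠ a ∧ 1 ≠ b then 1 else 2

theorem otherColor_ne_left (a b : Fin 3) : otherColor a b ≠ a := by
  revert a b; decide

theorem otherColor_ne_right (a b : Fin 3) : otherColor a b ≠ b := by
  revert a b; decide

section GreedyColoring

open Encodable

variable {X : Type*} [Encodable X] (f : X → X)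

open Classical in
noncomputable def greedyColor (x : X) : Fin 3 :=
  otherColor
    (if encode (f x) < encode x then greedyColor (f x) else 0)
    (if h : ∃ y, f y = x ∧ encode y < encode x then greedyColor h.choose else 0)
termination_by encode x
decreasing_by
  all_goals first | assumption | exact h.choose_spec.2

theorem greedyColor_apply_ne {f : X → X} (hf : Injective f) {x : X} (hx : f x ≠ x) :
    greedyColor f (f x) ≠ greedyColor f x := by
  rcases (encode_injective.ne hx).lt_or_gt with hlt | hgt
  · rw [greedyColor.eq_1 f x, if_pos hlt]
    exact (otherColor_ne_left _ _).symm
  · have h : ∃ y, f y = f x ∧ encode y < encode (f x) := ⟨x, rfl, hgt⟩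
    have hx : h.choose = x := hf h.choose_spec.1
    rw [greedyColor.eq_1 f (f x), dif_pos h, hx]
    exact otherColor_ne_right _ _

end GreedyColoring

theorem exists_fin_three_coloring {X : Type*} [Countable X] {f : X → X} (hf : Injective f) :
    ∃ c : X → Fin 3, ∀ x, f x ≠ x → c (f x) ≠ c x :=
  have := Encodable.ofCountable X
  ⟨greedyColor f, fun _ => greedyColor_apply_ne hf⟩

theorem isomorphic_of_equiv {X Y : Type*} {I : Set (Set X)} {J : Set (Set Y)} (e : X ≃ Y)
    (h : ∀ S, S ∈ I ↔ e '' S ∈ J) : Isomorphic I J :=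
  ⟨e.symm, e.symm.bijective, fun S => by rw [← e.image_eq_preimage_symm]; exact h S⟩

theorem Isomorphic.symm {X Y : Type*} {I : Set (Set X)} {J : Set (Set Y)} (h : Isomorphic I J) :
    Isomorphic J I := by
  obtain ⟨f, hf, hIJ⟩ := h
  refine isomorphic_of_equiv (Equiv.ofBijective f hf) fun S => ?_
  rw [hIJ, Equiv.coe_ofBijective, hf.injective.preimage_image]

theorem IsIdeal.isomorphic_of_bijOn {X : Type*} [Countable X] {I J : Set (Set X)}
    (hI : IsIdeal I) (hJ : IsIdeal J) {A B : Set X} {g : X → X} (hg : BijOn g A B)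
    (hA : Aᶜ ∈ I) (hB : Bᶜ ∈ J) (hAinf : Aᶜ.Infinite) (hBinf : Bᶜ.Infinite)
    (hgIJ : ∀ S ⊆ A, S ∈ I ↔ g '' S ∈ J) : Isomorphic I J := by
  classical
  have := hAinf.to_subtype
  have := hBinf.to_subtype
  let e : X ≃ X := Equiv.subtypeCongr (p := (· ∈ A)) (q := (· ∈ B)) (hg.equiv g)
    (nonempty_equiv_of_countable.some : ↥Aᶜ ≃ ↥Bᶜ)
  have he_mem : ∀ x ∈ A, e x = g x := by
    intro x hx
    simp [e, Equiv.subtypeCongr, hx]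
    rfl
  have he_compl : ∀ x ∉ A, e x ∉ B := by
    intro x hx
    simp [e, Equiv.subtypeCongr, hx]
    exact Subtype.property (p := (· ∈ Bᶜ)) _
  have himage : ∀ S, e '' S ∩ B = g '' (S ∩ A) := by
    intro S
    ext y
    constructor
    · rintro ⟨⟨x, hxS, rfl⟩, hxB⟩
      have hxA : x ∈ A := not_not.1 fun hxA => he_compl x hxA hxB
      exact ⟨x, ⟨hxS, hxA⟩, (he_mem x hxA).symm⟩
    · rintro ⟨x, ⟨hxS, hxA⟩, rfl⟩
      exact ⟨⟨x, hxS, he_mem x hxA⟩, hg.mapsTo hxA⟩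
  refine isomorphic_of_equiv e fun S => ?_
  rw [← hI.inter_mem_iff hA, hgIJ _ inter_subset_right, ← himage, hJ.inter_mem_iff hB]

theorem MaximalIdeal.isomorphic_of_injOn {X : Type*} [Countable X] {I J : Set (Set X)}
    (hI : MaximalIdeal I) (hJ : MaximalIdeal J) {A : Set X} (hA : A ∉ I) {g : X → X}
    (hg : InjOn g A) (hgIJ : ∀ S ⊆ A, S ∈ I ↔ g '' S ∈ J) : Isomorphic I J := by
  obtain ⟨S₀, hS₀A, hS₀inf, hS₀I⟩ := hI.exists_infinite_subset_mem hA
  have hA' : A \ S₀ ∉ I := fun h => hA <|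
    hI.1.mem_of_subset (hI.1.union_mem h hS₀I) (by rw [sdiff_union_self]; exact subset_union_left)
  have hB' : g '' (A \ S₀) ∉ J := by rwa [← hgIJ _ sdiff_subset]
  refine hI.1.isomorphic_of_bijOn hJ.1 (hg.mono sdiff_subset).bijOn_image (hI.compl_mem hA')
    (hJ.compl_mem hB') (hS₀inf.mono fun x hx hx' => hx'.2 hx) ?_
    fun S hS => hgIJ S (hS.trans sdiff_subset)
  refine (hS₀inf.image (hg.mono hS₀A)).mono ?_
  rintro _ ⟨s, hs, rfl⟩ ⟨a, ha, hga⟩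
  exact ha.2 (hg (hS₀A hs) ha.1 hga.symm ▸ hs)

theorem BiInvariant.conj {X Y : Type*} {K : Set (Set X)} {L : Set (Set Y)} {f : X → X}
    (hf : BiInvariant K f) (e : X ≃ Y) (he : ∀ A, e '' A ∈ L ↔ A ∈ K) :
    BiInvariant L (e ∘ f ∘ e.symm) := by
  refine ⟨e.injective.comp (hf.1.comp e.symm.injective), fun B => ?_⟩
  rw [image_comp, image_comp, he, hf.2, ← he, e.image_symm_image]

section Oplus

variable {I J : Set (Set ℕ)}

theorem image_mk_false_mem_oplus (hJ : IsIdeal J) (S : Set ℕ) :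
    Prod.mk false '' S ∈ oplus I J ↔ S ∈ I := by
  simp [oplus, hJ.empty_mem]

theorem image_mk_true_mem_oplus (hI : IsIdeal I) (S : Set ℕ) :
    Prod.mk true '' S ∈ oplus I J ↔ S ∈ J := by
  simp [oplus, hI.empty_mem]

theorem oplus_mem_of_subset (hI : IsIdeal I) (hJ : IsIdeal J) {A B : Set (Bool × ℕ)}
    (hA : A ∈ oplus I J) (hBA : B ⊆ A) : B ∈ oplus I J :=
  ⟨hI.mem_of_subset hA.1 fun _ hn => hBA hn, hJ.mem_of_subset hA.2 fun _ hn => hBA hn⟩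

def swapSides : Bool × ℕ ≃ Bool × ℕ := Equiv.prodCongr Equiv.boolNot (Equiv.refl ℕ)

@[simp]
theorem swapSides_apply (p : Bool × ℕ) : swapSides p = (!p.1, p.2) := rfl

@[simp]
theorem swapSides_symm : swapSides.symm = swapSides := Equiv.ext fun _ => rfl

theorem image_swapSides_mem_oplus (A : Set (Bool × ℕ)) :
    swapSides '' A ∈ oplus J I ↔ A ∈ oplus I J := by
  simp [oplus, and_comm]

theorem exists_notMem_forall_ne (hI : IsIdeal I) {f : Bool × ℕ → Bool × ℕ} (hf : Injective f)
    (hD : {n | f (false, n) ≠ (false, n)} ∉ I) :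
    ∃ Q ∉ I, ∀ n ∈ Q, ∀ m ∈ Q, f (false, n) ≠ (false, m) := by
  obtain ⟨c, hc⟩ := exists_fin_three_coloring hf
  obtain ⟨i, hi⟩ := hI.exists_notMem_of_subset_iUnion
    (A := fun i => {n | f (false, n) ≠ (false, n) ∧ c (false, n) = i}) hD
    fun n hn => mem_iUnion.2 ⟨_, hn, rfl⟩
  refine ⟨_, hi, fun n hn m hm hnm => hc _ hn.1 ?_⟩
  rw [hnm, hn.2, hm.2]

theorem isomorphic_of_moved_left_notMem (hI : MaximalIdeal I) (hJ : MaximalIdeal J)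
    {f : Bool × ℕ → Bool × ℕ} (hf : BiInvariant (oplus I J) f)
    (hD : {n | f (false, n) ≠ (false, n)} ∉ I) : Isomorphic I J := by
  obtain ⟨Q, hQ, hQf⟩ := exists_notMem_forall_ne hI.1 hf.1 hD
  set A := {n ∈ Q | (f (false, n)).1 = true}
  -- `f` maps `{false} × (Q \ A)` into the small set `{false} × Qᶜ`.
  have hQA : Q \ A ∈ I := by
    rw [← image_mk_false_mem_oplus hJ.1, ← hf.2]
    refine oplus_mem_of_subset hI.1 hJ.1
      ((image_mk_false_mem_oplus hJ.1 _).2 (hI.compl_mem hQ)) ?_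
    rintro _ ⟨_, ⟨n, hn, rfl⟩, rfl⟩
    have hside : (f (false, n)).1 = false := by simpa [A, hn.1] using hn.2
    exact ⟨_, fun hm => hQf n hn.1 _ hm (Prod.ext hside rfl), Prod.ext hside.symm rfl⟩
  have hA : A ∉ I := fun h => hQ <|
    hI.1.mem_of_subset (hI.1.union_mem h hQA) (by rw [union_sdiff_self]; exact subset_union_right)
  have hfA : ∀ n ∈ A, f (false, n) = (true, (f (false, n)).2) := fun n hn => Prod.ext hn.2 rfl
  refine hI.isomorphic_of_injOn hJ hA (g := fun n => (f (false, n)).2)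
    (fun n hn m hm h => ?_) fun S hS => ?_
  · simpa using hf.1 ((hfA n hn).trans ((congrArg (Prod.mk true) h).trans (hfA m hm).symm))
  · have himage :
        f '' (Prod.mk false '' S) = Prod.mk true '' ((fun n => (f (false, n)).2) '' S) := by
      rw [image_image, image_image]
      exact image_congr fun n hn => hfA n (hS hn)
    rw [← image_mk_false_mem_oplus hJ.1, ← hf.2, himage, image_mk_true_mem_oplus hI.1]

end Oplus

/-- for non-isomorphic maximal ideals `I`, `J`, the ideal `I ⊕ J`
satisfies condition (C1). -/
theorem stmt_11 (I J : Set (Set ℕ)) (hI : MaximalIdeal I) (hJ : MaximalIdeal J)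
    (hnoniso : ¬ Isomorphic I J) :
    ∀ f : Bool × ℕ → Bool × ℕ, BiInvariant (oplus I J) f →
      (fixedSet f)ᶜ ∈ oplus I J := by
  intro f hf
  constructor
  · by_contra h
    exact hnoniso (isomorphic_of_moved_left_notMem hI hJ hf h)
  · by_contra h
    refine hnoniso (isomorphic_of_moved_left_notMem hJ hI
      (hf.conj swapSides image_swapSides_mem_oplus) ?_).symm
    simpa [fixedSet, Prod.ext_iff] using h
end

section
/- Let (I_n)_{n∈ω} be the sequence of consecutive intervals of ω in which I_n has length n!, and for A ⊆ ω let φ_n(A) = |A ∩ I_n| / n!. Then the density ideal I = {A ⊆ ω : lim_{n→∞} φ_n(A) = 0} is an anti-homogeneous ideal (and it is an Erdős–Ulam ideal). -/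
open Set Filter

/-- Left endpoints of the consecutive intervals `I_n` with `|I_n| = n!`. -/
def intStart (n : ℕ) : ℕ := ∑ k ∈ Finset.range n, Nat.factorial k

/-- `φ_n(A) = |A ∩ I_n| / n!`. -/
noncomputable def phi (n : ℕ) (A : Set ℕ) : ℝ :=
  ((A ∩ Set.Ico (intStart n) (intStart (n + 1))).ncard : ℝ) / (Nat.factorial n : ℝ)

/-- The density ideal `I = {A : φ_n(A) → 0}`. -/
def densIdeal : Set (Set ℕ) :=
  {A | Filter.Tendsto (fun n => phi n A) Filter.atTop (nhds 0)}

/-- The Erdős–Ulam ideal associated with `h`. -/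
def EU (h : ℕ → ℝ) : Set (Set ℕ) :=
  {A | Filter.Tendsto
    (fun n => (∑ k ∈ Finset.Icc 1 n, Set.indicator A h k) / (∑ k ∈ Finset.Icc 1 n, h k))
    Filter.atTop (nhds 0)}

/-!
Write `c_B(x) = |B ∩ [0, x)|`. Since `|I_0| + ⋯ + |I_{n-1}| ≤ |I_n|`, a set `B` lies in the density
ideal `I` iff `c_B(intStart (n + 1)) = o(n!)`, and `intStart n = o(n!)`.

If `Aᶜ ∈ I`, the increasing enumeration `e` of `A` satisfies `c_C ≤ c_{e⁻¹C} ≤ c_C + c_{Aᶜ}` for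
`C ⊆ A`, so `e` witnesses `I|A ≅ I`. Conversely, let `f : ω → A` witness `I|A ≅ I` and let `D` be
the set of points that `f` moves into a later interval. Then `f[D] ∩ I_n ⊆ f[[0, intStart n)]`, so
`f[D] ∈ I` and hence `D ∈ I`; every `k < intStart m` outside `D` is sent below `intStart m`, so
`c_{Aᶜ} ≤ c_D` at every `intStart m`, and `Aᶜ ∈ I`.

For the Erdős–Ulam part, give each point of `I_n` the weight `2ⁿ / n!`. Then `B ∩ I_n` has weight
`φ_n(B) 2ⁿ`, and since the block weights `2ⁿ` grow geometrically, the weighted density of `B`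
tends to `0` iff `φ_n(B)` does.
-/

open scoped Classical Nat
open Asymptotics Topology

lemma intStart_succ (n : ℕ) : intStart (n + 1) = intStart n + n ! :=
  Finset.sum_range_succ _ n

lemma intStart_strictMono : StrictMono intStart :=
  strictMono_nat_of_lt_succ fun n => by rw [intStart_succ]; have := n.factorial_pos; omega

lemma self_le_intStart (n : ℕ) : n ≤ intStart n :=
  intStart_strictMono.le_apply

lemma intStart_le_factorial (n : ℕ) : intStart n ≤ n ! := by
  induction n with
  | zero => simp [intStart]
  | succ n ih =>
    rw [intStart_succ, Nat.factorial_succ]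
    rcases n with _ | n
    · simp [intStart]
    · nlinarith

lemma intStart_succ_le (n : ℕ) : intStart (n + 1) ≤ 2 * n ! := by
  rw [intStart_succ]; linarith [intStart_le_factorial n]

lemma isLittleO_intStart :
    (fun n => (intStart n : ℝ)) =o[atTop] (fun n => (n ! : ℝ)) := by
  rw [isLittleO_iff_tendsto fun n hn => absurd hn (by positivity)]
  refine squeeze_zero' (Eventually.of_forall fun n => by positivity) ?_
    (tendsto_const_div_atTop_nhds_zero_nat 2)
  filter_upwards [eventually_ge_atTop 1] with n hn
  obtain ⟨m, rfl⟩ : ∃ m, n = m + 1 := ⟨n - 1, by omega⟩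
  rw [div_le_div_iff₀ (by positivity) (by positivity)]
  have : (intStart (m + 1) : ℝ) ≤ 2 * m ! := by exact_mod_cast intStart_succ_le m
  push_cast [Nat.factorial_succ]
  have : (0 : ℝ) ≤ m ! := by positivity
  nlinarith

lemma ncard_inter_Ico (B : Set ℕ) [DecidablePred (· ∈ B)] (a b : ℕ) :
    (B ∩ Ico a b).ncard = ((Finset.Ico a b).filter (· ∈ B)).card := by
  rw [← Set.ncard_coe_finset, Finset.coe_filter]
  congr 1
  ext k
  simp [and_comm]

lemma phi_nonneg (n : ℕ) (B : Set ℕ) : 0 ≤ phi n B := by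
  unfold phi; positivity

lemma phi_univ (n : ℕ) : phi n univ = 1 := by
  rw [phi, univ_inter, Set.ncard_eq_toFinset_card', Set.toFinset_Ico, Nat.card_Ico, intStart_succ]
  simp [n.factorial_pos.ne']

lemma phi_mono {A B : Set ℕ} (h : B ⊆ A) (n : ℕ) : phi n B ≤ phi n A := by
  unfold phi
  gcongr
  exact (finite_Ico _ _).inter_of_right A

lemma phi_union_le (A B : Set ℕ) (n : ℕ) : phi n (A ∪ B) ≤ phi n A + phi n B := by
  unfold phi
  rw [← add_div, union_inter_distrib_right]
  gcongr
  exact_mod_cast Set.ncard_union_le _ _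

lemma phi_mul_factorial (n : ℕ) (B : Set ℕ) [DecidablePred (· ∈ B)] :
    phi n B * n ! = Nat.count (· ∈ B) (intStart (n + 1)) - Nat.count (· ∈ B) (intStart n) := by
  have hsplit := Finset.sum_range_add_sum_Ico (fun k => if k ∈ B then 1 else 0)
    (intStart_strictMono n.lt_add_one).le
  simp only [← Finset.card_filter, ← Nat.count_eq_card_filter_range] at hsplit
  rw [phi, div_mul_cancel₀ _ (by positivity), ncard_inter_Ico, ← hsplit]
  push_cast; ring

lemma sum_range_phi_mul_factorial (N : ℕ) (B : Set ℕ) [DecidablePred (· ∈ B)] :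
    ∑ M ∈ Finset.range N, phi M B * M ! = Nat.count (· ∈ B) (intStart N) := by
  simp_rw [phi_mul_factorial]
  rw [Finset.sum_range_sub (fun M => (Nat.count (· ∈ B) (intStart M) : ℝ))]
  simp [intStart]

lemma mem_densIdeal_of_subset {A B : Set ℕ} (hA : A ∈ densIdeal) (h : B ⊆ A) : B ∈ densIdeal :=
  squeeze_zero (fun n => phi_nonneg n B) (fun n => phi_mono h n) hA

lemma union_mem_densIdeal {A B : Set ℕ} (hA : A ∈ densIdeal) (hB : B ∈ densIdeal) :
    A ∪ B ∈ densIdeal :=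
  squeeze_zero (fun n => phi_nonneg n _) (fun n => phi_union_le A B n) (by simpa using hA.add hB)

lemma mem_densIdeal_of_finite {B : Set ℕ} (hB : B.Finite) : B ∈ densIdeal := by
  obtain ⟨m, hm⟩ := hB.bddAbove
  refine tendsto_const_nhds.congr' ?_
  filter_upwards [eventually_gt_atTop m] with n hn
  have hempty : B ∩ Ico (intStart n) (intStart (n + 1)) = ∅ :=
    eq_empty_of_forall_notMem fun k hk => by
      have := hm hk.1
      have := self_le_intStart n
      have := hk.2.1
      omega
  simp [phi, hempty]

lemma univ_notMem_densIdeal : (univ : Set ℕ) ∉ densIdeal := by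
  simp [densIdeal, phi_univ]

theorem isIdeal_densIdeal : IsIdeal densIdeal :=
  ⟨fun _ _ => mem_densIdeal_of_subset, fun _ _ => union_mem_densIdeal,
    fun _ => mem_densIdeal_of_finite, univ_notMem_densIdeal⟩

theorem mem_densIdeal_iff_count {B : Set ℕ} [DecidablePred (· ∈ B)] :
    B ∈ densIdeal ↔
      (fun n => (Nat.count (· ∈ B) (intStart (n + 1)) : ℝ)) =o[atTop] (fun n => (n ! : ℝ)) := by
  have hfac (n : ℕ) : (n ! : ℝ) ≠ 0 := by positivity
  have hphi : B ∈ densIdeal ↔ (fun n => phi n B * n !) =o[atTop] (fun n => (n ! : ℝ)) := by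
    rw [isLittleO_iff_tendsto fun n h => absurd h (hfac n)]
    simp only [mul_div_cancel_right₀ _ (hfac _)]
    rfl
  have hstart (n : ℕ) : ∑ i ∈ Finset.range n, (i ! : ℝ) = intStart n := by
    simp [intStart]
  rw [hphi]
  constructor
  · intro h
    have hsum := h.sum_range (fun n => by positivity) <| by
      simp only [hstart]
      exact tendsto_natCast_atTop_atTop.comp intStart_strictMono.tendsto_atTop
    simp only [sum_range_phi_mul_factorial, hstart] at hsum
    refine (hsum.comp_tendsto (tendsto_add_atTop_nat 1)).trans_isBigO
      (isBigO_of_le' (c := 2) _ fun n => ?_)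
    simp only [Function.comp, Real.norm_natCast]
    exact_mod_cast intStart_succ_le n
  · refine fun h => IsBigO.trans_isLittleO (isBigO_of_le _ fun n => ?_) h
    have hmono := Nat.count_monotone (· ∈ B) (intStart_strictMono n.lt_add_one).le
    rw [phi_mul_factorial, Real.norm_natCast, Real.norm_of_nonneg (by simpa using hmono)]
    simp

lemma isLittleO_of_natCast_le {α : Type*} {l : Filter α} {g : α → ℝ} {u v : α → ℕ}
    (huv : ∀ a, u a ≤ v a) (hv : (fun a => (v a : ℝ)) =o[l] g) : (fun a => (u a : ℝ)) =o[l] g :=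
  (isBigO_of_le _ fun a => by simpa using huv a).trans_isLittleO hv

lemma count_add_count_compl (A : Set ℕ) (x : ℕ) :
    Nat.count (· ∈ A) x + Nat.count (· ∈ Aᶜ) x = x := by
  simpa [Nat.count_eq_card_filter_range] using
    Finset.card_filter_add_card_filter_not (s := Finset.range x) (· ∈ A)

lemma mem_restr_univ {X : Type*} {I : Set (Set X)} {C : Set X} : C ∈ restr I univ ↔ C ∈ I := by
  simp [restr]

lemma mem_restr_of_subset {X : Type*} {I : Set (Set X)}
    (hI : ∀ B C : Set X, B ∈ I → C ⊆ B → C ∈ I) {A C : Set X} (hCA : C ⊆ A) :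
    C ∈ restr I A ↔ C ∈ I := by
  refine ⟨fun ⟨B, hB, hC⟩ => hI B C hB (hC ▸ inter_subset_left), fun hC => ⟨C, hC, ?_⟩⟩
  exact (inter_eq_self_of_subset_left hCA).symm

lemma rIso_univ_iff {X : Type*} {I : Set (Set X)}
    (hI : ∀ B C : Set X, B ∈ I → C ⊆ B → C ∈ I) {A : Set X} :
    RIso I A univ ↔ ∃ f : X → X, BijOn f univ A ∧ ∀ C ⊆ A, (C ∈ I ↔ f ⁻¹' C ∈ I) := by
  refine exists_congr fun f => and_congr_right fun _ => forall₂_congr fun C hC => ?_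
  rw [mem_restr_of_subset hI hC, univ_inter, mem_restr_univ]

lemma count_le_count_nth_preimage {A C : Set ℕ} (hCA : C ⊆ A) (x : ℕ) :
    Nat.count (· ∈ C) x ≤ Nat.count (· ∈ Nat.nth (· ∈ A) ⁻¹' C) x := by
  simp only [Nat.count_eq_card_filter_range]
  refine Finset.card_le_card_of_injOn (Nat.count (· ∈ A)) (fun c hc => ?_) fun c hc d hd h => ?_
  · simp only [Finset.coe_filter, Finset.mem_range] at hc ⊢
    refine ⟨(Nat.count_le _).trans_lt hc.1, ?_⟩
    rw [mem_preimage, Nat.nth_count (hCA hc.2)]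
    exact hc.2
  · simp only [Finset.coe_filter, Finset.mem_range] at hc hd
    exact Nat.count_injective (hCA hc.2) (hCA hd.2) h

lemma count_nth_preimage_le {A : Set ℕ} (hA : A.Infinite) (C : Set ℕ) (x : ℕ) :
    Nat.count (· ∈ Nat.nth (· ∈ A) ⁻¹' C) x ≤ Nat.count (· ∈ C) x + Nat.count (· ∈ Aᶜ) x := by
  have hlow :
      Nat.count (· ∈ Nat.nth (· ∈ A) ⁻¹' C) (Nat.count (· ∈ A) x) ≤ Nat.count (· ∈ C) x := by
    rw [Nat.count_eq_card_filter_range, Nat.count_eq_card_filter_range (· ∈ C)]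
    refine Finset.card_le_card_of_injOn (Nat.nth (· ∈ A)) (fun k hk => ?_)
      (Nat.nth_injective hA).injOn
    simp only [Finset.coe_filter, Finset.mem_range] at hk ⊢
    exact ⟨Nat.nth_lt_of_lt_count hk.1, hk.2⟩
  calc Nat.count (· ∈ Nat.nth (· ∈ A) ⁻¹' C) x
      = Nat.count (· ∈ Nat.nth (· ∈ A) ⁻¹' C) (Nat.count (· ∈ A) x + Nat.count (· ∈ Aᶜ) x) := by
        rw [count_add_count_compl]
    _ ≤ _ := by rw [Nat.count_add]; exact add_le_add hlow (Nat.count_le _)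

lemma bijOn_nth {A : Set ℕ} (hA : A.Infinite) : BijOn (Nat.nth (· ∈ A)) univ A := by
  have h := (Nat.nth_injective hA).injOn.bijOn_image (s := univ)
  rwa [image_univ, Nat.range_nth_of_infinite hA] at h

lemma infinite_of_compl_mem_densIdeal {A : Set ℕ} (hA : Aᶜ ∈ densIdeal) : A.Infinite :=
  fun hfin => univ_notMem_densIdeal <| by
    simpa using union_mem_densIdeal (mem_densIdeal_of_finite hfin) hA

lemma rIso_of_compl_mem_densIdeal {A : Set ℕ} (hA : Aᶜ ∈ densIdeal) : RIso densIdeal A univ := by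
  have hinf := infinite_of_compl_mem_densIdeal hA
  refine (rIso_univ_iff fun _ _ => mem_densIdeal_of_subset).2
    ⟨Nat.nth (· ∈ A), bijOn_nth hinf, fun C hCA => ?_⟩
  rw [mem_densIdeal_iff_count] at hA
  simp only [mem_densIdeal_iff_count]
  refine ⟨fun hC => ?_, isLittleO_of_natCast_le fun n => count_le_count_nth_preimage hCA _⟩
  refine isLittleO_of_natCast_le (fun n => count_nth_preimage_le hinf C _) ?_
  push_cast
  exact hC.add hA

/-- The points that `f` moves into a later interval. -/
def crossingSet (f : ℕ → ℕ) : Set ℕ := {k | ∃ m, k < intStart m ∧ intStart m ≤ f k}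

lemma count_image_crossingSet_le (f : ℕ → ℕ) (n : ℕ) :
    Nat.count (· ∈ f '' crossingSet f) (intStart (n + 1)) ≤ intStart n := by
  rw [Nat.count_eq_card_filter_range]
  refine (Finset.card_le_card (t := (Finset.range (intStart n)).image f) fun c hc => ?_).trans
    ((Finset.card_image_le).trans (Finset.card_range _).le)
  simp only [Finset.mem_filter, Finset.mem_range] at hc
  obtain ⟨hc, k, ⟨m, hkm, hmk⟩, rfl⟩ := hc
  have hmn : m ≤ n := Nat.lt_succ_iff.1 (intStart_strictMono.lt_iff_lt.1 (hmk.trans_lt hc))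
  exact Finset.mem_image_of_mem f
    (Finset.mem_range.2 (hkm.trans_le (intStart_strictMono.monotone hmn)))

lemma count_compl_le_count_crossingSet {A : Set ℕ} {f : ℕ → ℕ} (hf : Function.Injective f)
    (hfA : ∀ k, f k ∈ A) (m : ℕ) :
    Nat.count (· ∈ Aᶜ) (intStart m) ≤ Nat.count (· ∈ crossingSet f) (intStart m) := by
  have hstay : Nat.count (· ∈ (crossingSet f)ᶜ) (intStart m) ≤ Nat.count (· ∈ A) (intStart m) := by
    simp only [Nat.count_eq_card_filter_range]
    refine Finset.card_le_card_of_injOn f (fun k hk => ?_) hf.injOn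
    simp only [Finset.coe_filter, Finset.mem_range, mem_compl_iff, crossingSet, mem_ofPred_eq,
      not_exists, not_and, not_le] at hk ⊢
    exact ⟨hk.2 m hk.1, hfA k⟩
  have := count_add_count_compl A (intStart m)
  have := count_add_count_compl (crossingSet f) (intStart m)
  omega

lemma compl_mem_densIdeal_of_rIso {A : Set ℕ} (h : RIso densIdeal A univ) : Aᶜ ∈ densIdeal := by
  obtain ⟨f, hbij, hf⟩ := (rIso_univ_iff fun _ _ => mem_densIdeal_of_subset).1 h
  have hfA (k : ℕ) : f k ∈ A := hbij.mapsTo (mem_univ k)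
  have himage : f '' crossingSet f ∈ densIdeal :=
    mem_densIdeal_iff_count.2 <| isLittleO_of_natCast_le (count_image_crossingSet_le f)
      isLittleO_intStart
  have hcross : crossingSet f ∈ densIdeal :=
    mem_densIdeal_of_subset ((hf _ (image_subset_iff.2 fun k _ => hfA k)).1 himage)
      (subset_preimage_image f _)
  exact mem_densIdeal_iff_count.2 <| isLittleO_of_natCast_le
    (fun n => count_compl_le_count_crossingSet (injOn_univ.1 hbij.injOn) hfA _)
    (mem_densIdeal_iff_count.1 hcross)

theorem antiHomogIdeal_densIdeal : AntiHomogIdeal densIdeal :=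
  Set.ext fun _ => ⟨compl_mem_densIdeal_of_rIso, rIso_of_compl_mem_densIdeal⟩

/-- The index `n` of the interval `I_n = [intStart n, intStart (n + 1))` containing `k`. -/
noncomputable def blockIdx (k : ℕ) : ℕ := Nat.findGreatest (fun n => intStart n ≤ k) k

lemma le_blockIdx {m k : ℕ} (h : intStart m ≤ k) : m ≤ blockIdx k :=
  Nat.le_findGreatest ((self_le_intStart m).trans h) h

lemma intStart_blockIdx_le (k : ℕ) : intStart (blockIdx k) ≤ k :=
  Nat.findGreatest_spec (P := fun n => intStart n ≤ k) (Nat.zero_le k) (by simp [intStart])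

lemma lt_intStart_blockIdx_succ (k : ℕ) : k < intStart (blockIdx k + 1) := by
  by_contra! h
  exact Nat.findGreatest_is_greatest (Nat.lt_succ_self _) ((self_le_intStart _).trans h) h

lemma blockIdx_eq {n k : ℕ} (h₁ : intStart n ≤ k) (h₂ : k < intStart (n + 1)) : blockIdx k = n :=
  le_antisymm (Nat.lt_succ_iff.1 <| intStart_strictMono.lt_iff_lt.1 <|
    (intStart_blockIdx_le k).trans_lt h₂) (le_blockIdx h₁)

lemma tendsto_blockIdx : Tendsto blockIdx atTop atTop :=
  tendsto_atTop.2 fun m => eventually_atTop.2 ⟨intStart m, fun _ => le_blockIdx⟩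

noncomputable def euWeight (k : ℕ) : ℝ := 2 ^ blockIdx k / (blockIdx k)!

lemma euWeight_nonneg (k : ℕ) : 0 ≤ euWeight k := by
  unfold euWeight; positivity

lemma sum_range_intStart {M : Type*} [AddCommMonoid M] (u : ℕ → M) (N : ℕ) :
    ∑ k ∈ Finset.range (intStart N), u k =
      ∑ n ∈ Finset.range N, ∑ k ∈ Finset.Ico (intStart n) (intStart (n + 1)), u k := by
  induction N with
  | zero => simp [intStart]
  | succ N ih =>
    rw [Finset.sum_range_succ, ← ih,
      Finset.sum_range_add_sum_Ico _ (intStart_strictMono N.lt_add_one).le]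

lemma sum_Ico_indicator_euWeight (B : Set ℕ) (n : ℕ) :
    ∑ k ∈ Finset.Ico (intStart n) (intStart (n + 1)), B.indicator euWeight k = phi n B * 2 ^ n := by
  have hconst : ∀ k ∈ Finset.Ico (intStart n) (intStart (n + 1)),
      B.indicator euWeight k = if k ∈ B then 2 ^ n / (n ! : ℝ) else 0 := fun k hk => by
    rw [Finset.mem_Ico] at hk
    rw [Set.indicator_apply, euWeight, blockIdx_eq hk.1 hk.2]
  rw [Finset.sum_congr rfl hconst, ← Finset.sum_filter, Finset.sum_const, nsmul_eq_mul, phi,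
    ncard_inter_Ico]
  ring

lemma sum_Ico_euWeight (n : ℕ) :
    ∑ k ∈ Finset.Ico (intStart n) (intStart (n + 1)), euWeight k = 2 ^ n := by
  simpa [phi_univ] using sum_Ico_indicator_euWeight univ n

lemma sum_range_two_pow (N : ℕ) : ∑ M ∈ Finset.range N, (2 : ℝ) ^ M = 2 ^ N - 1 := by
  rw [geom_sum_eq (by norm_num : (2 : ℝ) ≠ 1)]
  norm_num

lemma not_summable_euWeight : ¬ Summable euWeight := fun hs => by
  obtain ⟨N, hN⟩ := pow_unbounded_of_one_lt (∑' k, euWeight k) one_lt_two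
  have := hs.sum_le_tsum (Finset.Ico (intStart N) (intStart (N + 1))) fun k _ => euWeight_nonneg k
  rw [sum_Ico_euWeight] at this
  linarith

lemma tendsto_sum_mul_two_pow_div {a : ℕ → ℝ} (ha : Tendsto a atTop (𝓝 0)) :
    Tendsto (fun N => (∑ M ∈ Finset.range N, a M * 2 ^ M) / 2 ^ N) atTop (𝓝 0) := by
  have h : (fun M => a M * 2 ^ M) =o[atTop] (fun M => (2 : ℝ) ^ M) := by
    simpa using ((isLittleO_one_iff ℝ).2 ha).mul_isBigO (isBigO_refl (fun M => (2 : ℝ) ^ M) atTop)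
  have hsum := h.sum_range (fun M => by positivity) <| by
    simp only [sum_range_two_pow]
    exact tendsto_atTop_add_const_right _ (-1) (tendsto_pow_atTop_atTop_of_one_lt one_lt_two)
  refine (hsum.trans_isBigO (isBigO_of_le _ fun N => ?_)).tendsto_div_nhds_zero
  rw [sum_range_two_pow, Real.norm_of_nonneg (by simpa using one_le_pow₀ one_le_two),
    Real.norm_of_nonneg (by positivity)]
  linarith

noncomputable def euRatio (B : Set ℕ) (n : ℕ) : ℝ :=
  (∑ k ∈ Finset.Icc 1 n, B.indicator euWeight k) / ∑ k ∈ Finset.Icc 1 n, euWeight k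

lemma euRatio_nonneg (B : Set ℕ) (n : ℕ) : 0 ≤ euRatio B n :=
  div_nonneg (Finset.sum_nonneg fun k _ => indicator_nonneg (fun k _ => euWeight_nonneg k) k)
    (Finset.sum_nonneg fun k _ => euWeight_nonneg k)

lemma Ico_intStart_subset_Icc {N n : ℕ} (hN : 1 ≤ N) (hn : intStart (N + 1) ≤ n + 1) :
    Finset.Ico (intStart N) (intStart (N + 1)) ⊆ Finset.Icc 1 n := by
  have := self_le_intStart N
  intro k hk
  simp only [Finset.mem_Ico, Finset.mem_Icc] at hk ⊢
  omega

lemma sum_Icc_indicator_euWeight_le (B : Set ℕ) (n : ℕ) :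
    ∑ k ∈ Finset.Icc 1 n, B.indicator euWeight k ≤
      ∑ M ∈ Finset.range (blockIdx n + 1), phi M B * 2 ^ M := by
  rw [← Finset.sum_congr rfl fun M _ => sum_Ico_indicator_euWeight B M, ← sum_range_intStart]
  refine Finset.sum_le_sum_of_subset_of_nonneg (fun k hk => ?_)
    fun k _ _ => indicator_nonneg (fun k _ => euWeight_nonneg k) k
  have := lt_intStart_blockIdx_succ n
  simp only [Finset.mem_Icc, Finset.mem_range] at hk ⊢
  omega

lemma euRatio_le (B : Set ℕ) {n : ℕ} (hn : 2 ≤ blockIdx n) :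
    euRatio B n ≤
      4 * ((∑ M ∈ Finset.range (blockIdx n + 1), phi M B * 2 ^ M) / 2 ^ (blockIdx n + 1)) := by
  obtain ⟨M, hM⟩ : ∃ M, blockIdx n = M + 1 := ⟨blockIdx n - 1, by omega⟩
  have hden : (2 : ℝ) ^ M ≤ ∑ k ∈ Finset.Icc 1 n, euWeight k :=
    (sum_Ico_euWeight M).symm.le.trans <|
      Finset.sum_le_sum_of_subset_of_nonneg
        (Ico_intStart_subset_Icc (by omega) (hM ▸ (intStart_blockIdx_le n).trans n.le_succ))
        fun k _ _ => euWeight_nonneg k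
  have hnum : 0 ≤ ∑ M ∈ Finset.range (blockIdx n + 1), phi M B * 2 ^ M :=
    Finset.sum_nonneg fun M _ => mul_nonneg (phi_nonneg M B) (by positivity)
  calc euRatio B n ≤ (∑ M ∈ Finset.range (blockIdx n + 1), phi M B * 2 ^ M) / 2 ^ M :=
        div_le_div₀ hnum (sum_Icc_indicator_euWeight_le B n) (by positivity) hden
    _ = _ := by rw [hM]; field_simp; ring

lemma phi_le_two_mul_euRatio (B : Set ℕ) {N : ℕ} (hN : 1 ≤ N) :
    phi N B ≤ 2 * euRatio B (intStart (N + 1) - 1) := by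
  have hN1 := self_le_intStart (N + 1)
  have hsub := Ico_intStart_subset_Icc hN (n := intStart (N + 1) - 1) (by omega)
  have hnum : phi N B * 2 ^ N ≤
      ∑ k ∈ Finset.Icc 1 (intStart (N + 1) - 1), B.indicator euWeight k :=
    (sum_Ico_indicator_euWeight B N).symm.le.trans <| Finset.sum_le_sum_of_subset_of_nonneg hsub
      fun k _ _ => indicator_nonneg (fun k _ => euWeight_nonneg k) k
  have hden_pos : (0 : ℝ) < ∑ k ∈ Finset.Icc 1 (intStart (N + 1) - 1), euWeight k :=
    (pow_pos two_pos N).trans_le <| (sum_Ico_euWeight N).symm.le.trans <|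
      Finset.sum_le_sum_of_subset_of_nonneg hsub fun k _ _ => euWeight_nonneg k
  have hden : ∑ k ∈ Finset.Icc 1 (intStart (N + 1) - 1), euWeight k ≤ 2 ^ (N + 1) := by
    have hrange : ∑ k ∈ Finset.range (intStart (N + 1)), euWeight k = 2 ^ (N + 1) - 1 := by
      simp only [sum_range_intStart, sum_Ico_euWeight, sum_range_two_pow]
    refine (Finset.sum_le_sum_of_subset_of_nonneg (fun k hk => ?_)
      fun k _ _ => euWeight_nonneg k).trans (hrange.le.trans (by linarith))
    simp only [Finset.mem_Icc, Finset.mem_range] at hk ⊢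
    omega
  calc phi N B = 2 * (phi N B * 2 ^ N / 2 ^ (N + 1)) := by rw [pow_succ]; field_simp
    _ ≤ 2 * euRatio B (intStart (N + 1) - 1) := by
      gcongr
      exact div_le_div₀ ((mul_nonneg (phi_nonneg N B) (by positivity)).trans hnum) hnum
        hden_pos hden

theorem densIdeal_eq_EU : densIdeal = EU euWeight := by
  ext B
  refine ⟨fun hB => ?_, fun hB => ?_⟩
  · have hlim := ((tendsto_sum_mul_two_pow_div hB).comp
      ((tendsto_add_atTop_nat 1).comp tendsto_blockIdx)).const_mul 4
    rw [mul_zero] at hlim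
    refine squeeze_zero' (Eventually.of_forall fun n => euRatio_nonneg B n) ?_ hlim
    filter_upwards [tendsto_blockIdx.eventually_ge_atTop 2] with n hn
    exact euRatio_le B hn
  · have hx : Tendsto (fun N => intStart (N + 1) - 1) atTop atTop :=
      tendsto_atTop_mono (fun N => show N ≤ _ by have := self_le_intStart (N + 1); omega)
        tendsto_id
    have hlim := ((show Tendsto (euRatio B) atTop (𝓝 0) from hB).comp hx).const_mul 2
    rw [mul_zero] at hlim
    refine squeeze_zero' (Eventually.of_forall fun N => phi_nonneg N B) ?_ hlim
    filter_upwards [eventually_ge_atTop 1] with N hN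
    exact phi_le_two_mul_euRatio B hN

/-- `densIdeal` is an anti-homogeneous ideal, and it is an
Erdős–Ulam ideal. -/
theorem stmt_15 :
    IsIdeal densIdeal ∧ AntiHomogIdeal densIdeal ∧
    ∃ h : ℕ → ℝ, (∀ n, 0 ≤ h n) ∧ ¬ Summable h ∧ densIdeal = EU h :=
  ⟨isIdeal_densIdeal, antiHomogIdeal_densIdeal, euWeight, euWeight_nonneg, not_summable_euWeight,
    densIdeal_eq_EU⟩
end

section
/- An admissible ideal I on ω satisfies condition (C3) if and only if for every countable family {A_n : n ∈ ω} ⊆ I there exists A ∈ H(I) such that A ∩ A_n is finite for every n ∈ ω. -/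
open Set Filter

/-- `(x_n)` is `I`-convergent to `l`. -/
def IConv (I : Set (Set ℕ)) (x : ℕ → ℝ) (l : ℝ) : Prop :=
  ∀ ε : ℝ, 0 < ε → {n : ℕ | ε ≤ |x n - l|} ∈ I

/-- Condition (C3): every `I`-convergent sequence admits a bi-`I`-invariant
injection along which it converges classically. -/
def CondC3 (I : Set (Set ℕ)) : Prop :=
  ∀ (x : ℕ → ℝ) (l : ℝ), IConv I x l →
    ∃ f : ℕ → ℕ, BiInvariant I f ∧
      Filter.Tendsto (fun n => x (f n)) Filter.atTop (nhds l)


/-!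
A set `B` lies in `H(I)` exactly when it is the range of a bi-`I`-invariant injection, and
for an injection `f` the subsequence `x ∘ f` converges to `l` exactly when `range f` meets
each set `{k : ε ≤ |x k - l|}` in a finite set. Given (C3) and a family `A n ∈ I`, apply (C3)
to the sequence that is `1 / (n + 1)` on `A n` minus the earlier `A m` and `0` off `⋃ A n`:
it `I`-converges to `0` because its superlevel sets are finite unions of the `A n`, and the
range of the resulting injection is the required `B`. Conversely, for an `I`-convergent
sequence apply the hypothesis to `A n = {k : 1 / (n + 1) ≤ |x k - l|}`.
-/

lemma restr_univ {X : Type*} (I : Set (Set X)) : restr I univ = I := by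
  ext C
  exact ⟨fun ⟨B, hB, hC⟩ => by rwa [hC, inter_univ], fun hC => ⟨C, hC, (inter_univ C).symm⟩⟩

namespace IsIdeal

variable {X : Type*} {I : Set (Set X)}

lemma mem_restr_iff (hI : IsIdeal I) {B C : Set X} (hCB : C ⊆ B) : C ∈ restr I B ↔ C ∈ I :=
  ⟨fun ⟨D, hD, hC⟩ => hC ▸ hI.1 D _ hD inter_subset_left,
    fun hC => ⟨C, hC, (inter_eq_left.mpr hCB).symm⟩⟩

lemma biUnion_finset_mem {ι : Type*} (hI : IsIdeal I) {A : ι → Set X} (s : Finset ι)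
    (hA : ∀ i ∈ s, A i ∈ I) : (⋃ i ∈ s, A i) ∈ I := by
  classical
  induction s using Finset.induction_on with
  | empty => simpa using hI.2.2.1 ∅ finite_empty
  | insert i s _ ih =>
    rw [Finset.set_biUnion_insert]
    exact hI.2.1 _ _ (hA i (s.mem_insert_self i))
      (ih fun j hj => hA j (Finset.mem_insert_of_mem hj))

lemma mem_HF_iff (hI : IsIdeal I) {B : Set X} :
    B ∈ HF I ↔ ∃ f : X → X, BiInvariant I f ∧ range f = B := by
  have hrestr : ∀ (f : X → X) (C : Set X), C ⊆ B →
      ((C ∈ restr I B ↔ univ ∩ f ⁻¹' C ∈ restr I univ) ↔ (C ∈ I ↔ f ⁻¹' C ∈ I)) := by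
    intro f C hC
    rw [hI.mem_restr_iff hC, restr_univ, univ_inter]
  constructor
  · rintro ⟨f, hbij, hf⟩
    have hinj : Function.Injective f := injOn_univ.mp hbij.injOn
    have hrange : range f = B := by rw [← image_univ, hbij.image_eq]
    refine ⟨f, ⟨hinj, fun S => ?_⟩, hrange⟩
    have hS : f '' S ⊆ B := hrange ▸ image_subset_range f S
    rw [(hrestr f _ hS).mp (hf _ hS), preimage_image_eq S hinj]
  · rintro ⟨f, ⟨hinj, hf⟩, rfl⟩
    refine ⟨f, ⟨fun k _ => mem_range_self k, hinj.injOn, fun _ ⟨k, hk⟩ => ⟨k, trivial, hk⟩⟩,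
      fun C hC => (hrestr f C hC).mpr ?_⟩
    rw [← hf (f ⁻¹' C), image_preimage_eq_of_subset hC]

end IsIdeal

lemma tendsto_comp_iff_finite_range_inter {f : ℕ → ℕ} (hf : Function.Injective f)
    {x : ℕ → ℝ} {l : ℝ} :
    Tendsto (fun n => x (f n)) atTop (nhds l) ↔
      ∀ ε > 0, (range f ∩ {k | ε ≤ |x k - l|}).Finite := by
  simp only [Metric.tendsto_nhds, ← Nat.cofinite_eq_atTop, eventually_cofinite,
    ← image_preimage_eq_range_inter, finite_image_iff hf.injOn, Real.dist_eq, not_lt]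
  rfl

section InvFirstIndex

variable (A : ℕ → Set ℕ)

noncomputable def invFirstIndex (k : ℕ) : ℝ :=
  open Classical in
  if h : ∃ n, k ∈ A n then ((Nat.find h : ℝ) + 1)⁻¹ else 0

variable {A}

lemma invFirstIndex_nonneg (k : ℕ) : 0 ≤ invFirstIndex A k := by
  unfold invFirstIndex
  split <;> positivity

lemma inv_succ_le_invFirstIndex {n k : ℕ} (hk : k ∈ A n) :
    ((n : ℝ) + 1)⁻¹ ≤ invFirstIndex A k := by
  classical
  have h : ∃ m, k ∈ A m := ⟨n, hk⟩
  rw [invFirstIndex, dif_pos h]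
  gcongr
  exact Nat.find_le hk

lemma setOf_le_invFirstIndex_subset {ε : ℝ} (hε : 0 < ε) :
    {k | ε ≤ invFirstIndex A k} ⊆ ⋃ n ∈ Finset.range ⌈ε⁻¹⌉₊, A n := by
  classical
  intro k hk
  by_cases h : ∃ n, k ∈ A n
  · have hk' : ε ≤ ((Nat.find h : ℝ) + 1)⁻¹ := by
      simpa only [mem_ofPred_eq, invFirstIndex, dif_pos h] using hk
    have hlt : (Nat.find h : ℝ) < ⌈ε⁻¹⌉₊ :=
      calc (Nat.find h : ℝ) < Nat.find h + 1 := lt_add_one _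
        _ ≤ ε⁻¹ := (le_inv_comm₀ hε (by positivity)).mp hk'
        _ ≤ ⌈ε⁻¹⌉₊ := Nat.le_ceil _
    exact mem_biUnion (Finset.mem_range.mpr (mod_cast hlt)) (Nat.find_spec h)
  · simp only [mem_ofPred_eq, invFirstIndex, dif_neg h] at hk
    exact absurd hk (not_le.mpr hε)

lemma IsIdeal.iConv_invFirstIndex {I : Set (Set ℕ)} (hI : IsIdeal I) (hA : ∀ n, A n ∈ I) :
    IConv I (invFirstIndex A) 0 := by
  intro ε hε
  simp only [sub_zero, abs_of_nonneg (invFirstIndex_nonneg _)]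
  exact hI.1 _ _ (hI.biUnion_finset_mem _ fun n _ => hA n) (setOf_le_invFirstIndex_subset hε)

end InvFirstIndex

theorem stmt_16_general (I : Set (Set ℕ)) (hI : IsIdeal I) :
    CondC3 I ↔
      ∀ A : ℕ → Set ℕ, (∀ n, A n ∈ I) →
        ∃ B : Set ℕ, B ∈ HF I ∧ ∀ n, (B ∩ A n).Finite := by
  constructor
  · intro hC3 A hA
    obtain ⟨f, hf, hlim⟩ := hC3 _ 0 (hI.iConv_invFirstIndex hA)
    have hfin := (tendsto_comp_iff_finite_range_inter hf.1).mp hlim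
    refine ⟨range f, hI.mem_HF_iff.mpr ⟨f, hf, rfl⟩, fun n => ?_⟩
    refine (hfin _ (by positivity : (0 : ℝ) < ((n : ℝ) + 1)⁻¹)).subset ?_
    rintro k ⟨hkf, hkA⟩
    exact ⟨hkf, by simpa [abs_of_nonneg (invFirstIndex_nonneg k)]
      using inv_succ_le_invFirstIndex hkA⟩
  · intro h x l hconv
    obtain ⟨B, hB, hfin⟩ := h (fun n => {k | ((n : ℝ) + 1)⁻¹ ≤ |x k - l|})
      fun n => hconv _ (by positivity)
    obtain ⟨f, hf, rfl⟩ := hI.mem_HF_iff.mp hB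
    refine ⟨f, hf, (tendsto_comp_iff_finite_range_inter hf.1).mpr fun ε hε => ?_⟩
    obtain ⟨n, hn⟩ := exists_nat_one_div_lt hε
    refine (hfin n).subset fun k ⟨hkf, hk⟩ => ⟨hkf, ?_⟩
    exact (one_div ((n : ℝ) + 1) ▸ hn.le).trans hk

/-- an admissible ideal satisfies (C3) iff every countable
family in `I` admits `A ∈ H(I)` almost disjoint from all its members. -/
theorem stmt_16 (I : Set (Set ℕ)) (hI : IsIdeal I) (hadm : Admissible I) :
    CondC3 I ↔
      ∀ A : ℕ → Set ℕ, (∀ n, A n ∈ I) →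
        ∃ B : Set ℕ, B ∈ HF I ∧ ∀ n, (B ∩ A n).Finite :=
  stmt_16_general I hI
end

section
/- An admissible ideal I on ω satisfies condition (C5) if and only if for every A ∉ I with ω∖A ∉ I there exists B ∈ H(I) such that for every C ∈ H(I) with C ⊆ B, the set A ∩ C ∉ I. -/
/-!
The sets in `H(I)` are exactly the ranges of bi-`I`-invariant injections `ω → ω`. If `f` is one,
so is `g ∘ f` for every `g` bi-`I`-invariant on `f[ω]`, and every bi-invariant `h` with range
inside `f[ω]` arises this way, with `g = h ∘ f⁻¹`.

If `x` is not `I`-convergent to `l`, some `A = {n : |x_n - l| ≥ ε}` is not in `I`; the right-hand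
side (or `B = ω`, when `A ∈ I*`) gives `B ∈ H(I)` all of whose `H(I)`-subsets meet `A`
`I`-positively, so `x ∘ g ∘ f` is not `I`-convergent for the `f` with range `B`. Conversely, a set
`A` violating the right-hand side makes its indicator sequence violate (C5).
-/


open Set Filter

/-- A bi-`I`-invariant injection `g : S → S`. -/
def BiInvariantOn (I : Set (Set ℕ)) (S : Set ℕ) (g : ℕ → ℕ) : Prop :=
  Set.MapsTo g S S ∧ Set.InjOn g S ∧ ∀ A : Set ℕ, A ⊆ S → (g '' A ∈ I ↔ A ∈ I)

/-- Condition (C5). -/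
def CondC5 (I : Set (Set ℕ)) : Prop :=
  ∀ (x : ℕ → ℝ) (l : ℝ),
    (∀ f : ℕ → ℕ, BiInvariant I f →
      ∃ g : ℕ → ℕ, BiInvariantOn I (Set.range f) g ∧
        IConv I (fun n => x (g (f n))) l) →
    IConv I x l

section Ideal

variable {X : Type*} {I : Set (Set X)}

lemma restr_mem_iff (hI : IsIdeal I) {B C : Set X} (hCB : C ⊆ B) :
    C ∈ restr I B ↔ C ∈ I := by
  constructor
  · rintro ⟨D, hD, rfl⟩
    exact hI.1 D _ hD inter_subset_left
  · intro hC
    exact ⟨C, hC, (inter_eq_left.mpr hCB).symm⟩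

lemma BiInvariant.preimage_mem_iff {f : X → X} (hf : BiInvariant I f) {D : Set X}
    (hD : D ⊆ range f) : f ⁻¹' D ∈ I ↔ D ∈ I := by
  rw [← hf.2, image_preimage_eq_of_subset hD]

lemma BiInvariant.range_notMem (hI : IsIdeal I) {f : X → X} (hf : BiInvariant I f) :
    range f ∉ I := by
  rw [← image_univ, hf.2]
  exact hI.2.2.2

lemma mem_HF_iff (hI : IsIdeal I) {A : Set X} :
    A ∈ HF I ↔ ∃ f : X → X, BiInvariant I f ∧ range f = A := by
  constructor
  · rintro ⟨f, hbij, hrestr⟩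
    have hinj : Function.Injective f := injOn_univ.mp hbij.injOn
    have hrange : range f = A := by rw [← image_univ]; exact hbij.image_eq
    refine ⟨f, ⟨hinj, fun D => ?_⟩, hrange⟩
    have hfD : f '' D ⊆ A := hrange ▸ image_subset_range f D
    simpa only [restr_mem_iff hI hfD, univ_inter, preimage_image_eq D hinj,
      restr_mem_iff hI (subset_univ D)] using hrestr (f '' D) hfD
  · rintro ⟨f, hf, rfl⟩
    refine ⟨f, ⟨mapsTo_range f univ, hf.1.injOn, fun _ ⟨x, hx⟩ => ⟨x, trivial, hx⟩⟩,
      fun C hC => ?_⟩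
    rw [restr_mem_iff hI hC, univ_inter, restr_mem_iff hI (subset_univ _),
      hf.preimage_mem_iff hC]

lemma notMem_of_mem_HF (hI : IsIdeal I) {C : Set X} (hC : C ∈ HF I) : C ∉ I := by
  obtain ⟨f, hf, rfl⟩ := (mem_HF_iff hI).mp hC
  exact hf.range_notMem hI

lemma univ_mem_HF (hI : IsIdeal I) : (univ : Set X) ∈ HF I :=
  (mem_HF_iff hI).mpr ⟨id, ⟨Function.injective_id, fun A => by rw [image_id]⟩, range_id⟩

lemma inter_notMem_of_compl_mem (hI : IsIdeal I) {A C : Set X} (hAc : Aᶜ ∈ I)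
    (hC : C ∉ I) : A ∩ C ∉ I := fun hAC =>
  hC <| hI.1 _ C (hI.2.1 _ _ hAC hAc) fun n hn => by
    by_cases hA : n ∈ A
    exacts [Or.inl ⟨hA, hn⟩, Or.inr hA]

end Ideal

section Nat

variable {I : Set (Set ℕ)}

lemma BiInvariant.comp_biInvariantOn {f g : ℕ → ℕ} (hf : BiInvariant I f)
    (hg : BiInvariantOn I (range f) g) : BiInvariant I (g ∘ f) := by
  refine ⟨fun a b hab => hf.1 (hg.2.1 (mem_range_self a) (mem_range_self b) hab), fun D => ?_⟩
  rw [image_comp, hg.2.2 _ (image_subset_range f D), hf.2]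

lemma range_comp_subset_of_biInvariantOn {f g : ℕ → ℕ} (hg : BiInvariantOn I (range f) g) :
    range (g ∘ f) ⊆ range f := by
  rw [range_comp]
  exact hg.1.image_subset

lemma BiInvariant.biInvariantOn_comp_invFun {f h : ℕ → ℕ} (hf : BiInvariant I f)
    (hh : BiInvariant I h) (hhf : range h ⊆ range f) :
    BiInvariantOn I (range f) (h ∘ Function.invFun f) := by
  refine ⟨fun _ _ => hhf (mem_range_self _), fun a ha b hb hab => ?_, fun D hD => ?_⟩
  · rw [← Function.invFun_eq ha, ← Function.invFun_eq hb, hh.1 hab]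
  · have hinv : Function.invFun f '' D = f ⁻¹' D := by
      conv_lhs => rw [← image_preimage_eq_of_subset hD]
      exact (Function.leftInverse_invFun hf.1).image_image _
    rw [image_comp, hinv, hh.2, hf.preimage_mem_iff hD]

lemma iConv_indicator_iff (hI : IsIdeal I) {A : Set ℕ} : IConv I (A.indicator 1) 0 ↔ A ∈ I := by
  refine ⟨fun hA => ?_, fun hA ε hε => hI.1 A _ hA fun n hn => ?_⟩
  · convert hA 1 one_pos using 1
    ext n
    by_cases hn : n ∈ A <;> simp [hn]
  · by_contra hnA
    simp only [mem_ofPred_eq, indicator_of_notMem hnA, sub_zero, abs_zero] at hn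
    exact hn.not_gt hε

lemma BiInvariant.iConv_indicator_comp_iff (hI : IsIdeal I) {h : ℕ → ℕ} (hh : BiInvariant I h)
    {A : Set ℕ} : IConv I (fun n => A.indicator 1 (h n)) 0 ↔ A ∩ range h ∈ I := by
  rw [← hh.preimage_mem_iff inter_subset_right, preimage_inter_range, ← iConv_indicator_iff hI]
  rfl

lemma BiInvariant.inter_range_mem_of_iConv_comp {h : ℕ → ℕ} (hh : BiInvariant I h)
    {x : ℕ → ℝ} {l ε : ℝ} (hx : IConv I (x ∘ h) l) (hε : 0 < ε) :
    {n | ε ≤ |x n - l|} ∩ range h ∈ I := by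
  rw [← hh.preimage_mem_iff inter_subset_right, preimage_inter_range]
  exact hx ε hε

end Nat

theorem stmt_18_general (I : Set (Set ℕ)) (hI : IsIdeal I) :
    CondC5 I ↔
      ∀ A : Set ℕ, A ∉ I → Aᶜ ∉ I →
        ∃ B : Set ℕ, B ∈ HF I ∧ ∀ C : Set ℕ, C ∈ HF I → C ⊆ B → A ∩ C ∉ I := by
  constructor
  · intro hC5 A hA _
    by_contra! hsmall
    refine hA ((iConv_indicator_iff hI).mp (hC5 _ 0 fun f hf => ?_))
    obtain ⟨_, hC, hCf, hAC⟩ := hsmall (range f) ((mem_HF_iff hI).mpr ⟨f, hf, rfl⟩)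
    obtain ⟨h, hh, rfl⟩ := (mem_HF_iff hI).mp hC
    refine ⟨h ∘ Function.invFun f, hf.biInvariantOn_comp_invFun hh hCf, ?_⟩
    simpa only [Function.comp_apply, Function.leftInverse_invFun hf.1 _]
      using (hh.iConv_indicator_comp_iff hI).mpr hAC
  · intro hRHS x l hx ε hε
    by_contra hA
    obtain ⟨B, hB, hBA⟩ : ∃ B ∈ HF I, ∀ C ∈ HF I, C ⊆ B → {n | ε ≤ |x n - l|} ∩ C ∉ I := by
      by_cases hAc : {n | ε ≤ |x n - l|}ᶜ ∈ I
      · exact ⟨univ, univ_mem_HF hI,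
          fun C hC _ => inter_notMem_of_compl_mem hI hAc (notMem_of_mem_HF hI hC)⟩
      · exact hRHS _ hA hAc
    obtain ⟨f, hf, rfl⟩ := (mem_HF_iff hI).mp hB
    obtain ⟨g, hg, hxgf⟩ := hx f hf
    have hgf : BiInvariant I (g ∘ f) := hf.comp_biInvariantOn hg
    exact hBA _ ((mem_HF_iff hI).mpr ⟨_, hgf, rfl⟩) (range_comp_subset_of_biInvariantOn hg)
      (hgf.inter_range_mem_of_iConv_comp hxgf hε)

/-- an admissible ideal satisfies (C5) iff for every
`A ∉ I ∪ I*` there is `B ∈ H(I)` all of whose `H(I)`-subsets meet `A`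
`I`-positively. -/
theorem stmt_18 (I : Set (Set ℕ)) (hI : IsIdeal I) (hadm : Admissible I) :
    CondC5 I ↔
      ∀ A : Set ℕ, A ∉ I → Aᶜ ∉ I →
        ∃ B : Set ℕ, B ∈ HF I ∧ ∀ C : Set ℕ, C ∈ HF I → C ⊆ B → A ∩ C ∉ I :=
  stmt_18_general I hI
end

section
/- Let I_d be the ideal of sets of asymptotic density zero. If A ∈ H(I_d) and (a_n)_{n∈ω} is the increasing enumeration of A, then the bijection f : ω → A given by f(n) = a_n witnesses that I_d|A ≅ I_d; that is, for every X ⊆ ω, X ∈ I_d if and only if {a_n : n ∈ X} ∈ I_d. -/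
/-!
Since `a n ≥ n`, the map `a` only thins out initial segments, which gives one direction.
Conversely, if `a[X]` has density zero but `X` does not, then for every `c` there are arbitrarily
large `N` with `a N ≥ c N`, so `A` has lower density zero. Such an `A` is not in `H(I_d)`: given a
bijection `f : ω → A`, pick `M_k` increasing with `a (M_k) ≥ 2k M_k`. Only `M_k` elements of `A`
lie below `a (M_k)`, so at least half of `f[0, 2 M_k)` lies above it. The union `C` of these parts
above `a (M_k)` has density zero, because below `a (M_{k+1})` it is covered by `f[0, 2 M_k)`, which is small
compared to `a (M_k)`; yet `f⁻¹[C]` has upper density at least `1/2`.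
-/

open Set Filter

/-- The ideal of sets of asymptotic density zero. -/
def densityZero : Set (Set ℕ) :=
  {A | Filter.Tendsto (fun n => ((A ∩ Set.Iio n).ncard : ℝ) / (n : ℝ))
    Filter.atTop (nhds 0)}

theorem mem_restr_iff_of_subset {X : Type*} {I : Set (Set X)}
    (hI : ∀ A B : Set X, A ∈ I → B ⊆ A → B ∈ I) {A C : Set X} (hC : C ⊆ A) :
    C ∈ restr I A ↔ C ∈ I :=
  ⟨fun ⟨B, hB, hCB⟩ => hI B C hB (hCB ▸ inter_subset_left),
    fun h => ⟨C, h, (inter_eq_left.2 hC).symm⟩⟩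

theorem mem_densityZero_iff_eventually_mul_le {S : Set ℕ} :
    S ∈ densityZero ↔ ∀ k : ℕ, ∀ᶠ n in atTop, k * (S ∩ Iio n).ncard ≤ n := by
  simp only [densityZero, mem_ofPred_eq]
  constructor
  · intro h k
    filter_upwards [(tendsto_order.1 h).2 _ (Nat.one_div_pos_of_nat (n := k)),
      eventually_gt_atTop 0] with n hn hn0
    rw [div_lt_div_iff₀ (by exact_mod_cast hn0) (by positivity), one_mul] at hn
    have : (S ∩ Iio n).ncard * (k + 1) < n := by exact_mod_cast hn
    nlinarith
  · intro h
    refine tendsto_order.2 ⟨fun ε hε => Eventually.of_forall fun n => hε.trans_le (by positivity),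
      fun ε hε => ?_⟩
    obtain ⟨k, hk⟩ := exists_nat_one_div_lt hε
    filter_upwards [h (k + 1), eventually_gt_atTop 0] with n hn hn0
    refine lt_of_le_of_lt ?_ hk
    rw [div_le_div_iff₀ (by exact_mod_cast hn0) (by positivity)]
    exact_mod_cast (by linarith : (S ∩ Iio n).ncard * (k + 1) ≤ 1 * n)

theorem mem_densityZero_of_ncard_inter_Iio_le {S T : Set ℕ} (hS : S ∈ densityZero)
    (h : ∀ n, (T ∩ Iio n).ncard ≤ (S ∩ Iio n).ncard) : T ∈ densityZero := by
  rw [mem_densityZero_iff_eventually_mul_le] at hS ⊢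
  exact fun k => (hS k).mono fun n hn => (Nat.mul_le_mul_left k (h n)).trans hn

theorem mem_densityZero_of_subset {S T : Set ℕ} (hS : S ∈ densityZero) (hT : T ⊆ S) :
    T ∈ densityZero :=
  mem_densityZero_of_ncard_inter_Iio_le hS fun n =>
    ncard_le_ncard (inter_subset_inter_left _ hT) ((finite_Iio n).inter_of_right S)

theorem image_mem_densityZero {a : ℕ → ℕ} (ha : ∀ n, n ≤ a n) {X : Set ℕ}
    (hX : X ∈ densityZero) : a '' X ∈ densityZero :=
  mem_densityZero_of_ncard_inter_Iio_le hX fun n => calc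
    (a '' X ∩ Iio n).ncard ≤ (a '' (X ∩ Iio n)).ncard :=
      ncard_le_ncard (by rintro _ ⟨⟨p, hp, rfl⟩, hpn⟩; exact ⟨p, ⟨hp, (ha p).trans_lt hpn⟩, rfl⟩)
        (((finite_Iio n).inter_of_right X).image a)
    _ ≤ (X ∩ Iio n).ncard := ncard_image_le ((finite_Iio n).inter_of_right X)

theorem frequently_mul_le_of_image_mem_densityZero {a : ℕ → ℕ} (ha : StrictMono a) {X : Set ℕ}
    (hX : X ∉ densityZero) (haX : a '' X ∈ densityZero) (c : ℕ) :
    ∃ᶠ N in atTop, c * N ≤ a N := by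
  simp only [mem_densityZero_iff_eventually_mul_le, not_forall, not_eventually, not_le] at hX
  obtain ⟨k, hk⟩ := hX
  have hc := ha.tendsto_atTop.eventually (mem_densityZero_iff_eventually_mul_le.1 haX (c * k))
  refine (hk.and_eventually hc).mono fun N ⟨hN, hcN⟩ => ?_
  have hcard : (X ∩ Iio N).ncard ≤ (a '' X ∩ Iio (a N)).ncard :=
    ncard_le_ncard_of_injOn a (fun p ⟨hpX, hpN⟩ => ⟨mem_image_of_mem a hpX, ha hpN⟩)
      ha.injective.injOn ((finite_Iio _).inter_of_right _)
  calc c * N ≤ c * (k * (X ∩ Iio N).ncard) := Nat.mul_le_mul_left _ hN.le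
    _ ≤ c * k * (a '' X ∩ Iio (a N)).ncard := by
      rw [mul_assoc]; exact Nat.mul_le_mul_left _ (Nat.mul_le_mul_left _ hcard)
    _ ≤ a N := hcN

theorem Monotone.exists_le_lt_and_le_succ {u : ℕ → ℕ} (hu : Monotone u) {k n : ℕ} (hk : u k < n)
    (hn : ∃ i, n ≤ u i) : ∃ j, k ≤ j ∧ u j < n ∧ n ≤ u (j + 1) := by
  classical
  have hk_lt : k < Nat.find hn := by
    by_contra! h
    exact ((Nat.find_spec hn).trans (hu h)).not_gt hk
  refine ⟨Nat.find hn - 1, by omega, lt_of_not_ge (Nat.find_min hn (by omega)), ?_⟩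
  rw [Nat.sub_add_cancel (by omega)]
  exact Nat.find_spec hn

def lateImages (f a M : ℕ → ℕ) : Set ℕ := ⋃ k, f '' Iio (2 * M k) ∩ Ici (a (M k))

section lateImages

variable {f a M : ℕ → ℕ}

theorem le_ncard_preimage_lateImages_inter_Iio (ha : StrictMono a) (hf : Function.Injective f)
    (hfa : range f ⊆ range a) (k : ℕ) :
    M k ≤ (f ⁻¹' lateImages f a M ∩ Iio (2 * M k)).ncard := by
  set T := Iio (2 * M k)
  have hlow : (T \ f ⁻¹' Ici (a (M k))).ncard ≤ M k := by
    calc _ ≤ (a '' Iio (M k)).ncard :=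
          ncard_le_ncard_of_injOn f ?_ hf.injOn ((finite_Iio _).image a)
      _ = M k := by rw [ncard_image_of_injective _ ha.injective, ncard_Iio_nat]
    rintro x ⟨-, hx⟩
    obtain ⟨p, hp⟩ := hfa (mem_range_self x)
    refine ⟨p, ha.lt_iff_lt.1 ?_, hp⟩
    rw [hp]
    simpa using hx
  have hhigh : (T ∩ f ⁻¹' Ici (a (M k))).ncard ≤ (f ⁻¹' lateImages f a M ∩ T).ncard :=
    ncard_le_ncard (fun x ⟨hxT, hx⟩ => ⟨mem_iUnion.2 ⟨k, ⟨x, hxT, rfl⟩, hx⟩, hxT⟩)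
      ((finite_Iio _).inter_of_right _)
  have hsplit := ncard_inter_add_ncard_sdiff_eq_ncard T (f ⁻¹' Ici (a (M k)))
  rw [ncard_Iio_nat] at hsplit
  omega

theorem preimage_lateImages_notMem_densityZero (ha : StrictMono a) (hf : Function.Injective f)
    (hfa : range f ⊆ range a) (hM : StrictMono M) :
    f ⁻¹' lateImages f a M ∉ densityZero := by
  intro h
  obtain ⟨N, hN⟩ := eventually_atTop.1 (mem_densityZero_iff_eventually_mul_le.1 h 3)
  have hMN : N + 1 ≤ M (N + 1) := hM.id_le _
  have := hN (2 * M (N + 1)) (by omega)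
  have := le_ncard_preimage_lateImages_inter_Iio (M := M) ha hf hfa (N + 1)
  omega

theorem lateImages_inter_Iio_subset (ha : Monotone a) (hM : Monotone M) {j n : ℕ}
    (hn : n ≤ a (M (j + 1))) : lateImages f a M ∩ Iio n ⊆ f '' Iio (2 * M j) := by
  rintro _ ⟨hx, hxn⟩
  obtain ⟨i, ⟨p, hp, rfl⟩, hpi⟩ := mem_iUnion.1 hx
  simp only [mem_Iio, mem_Ici] at hp hpi hxn
  have hij : i ≤ j := by
    by_contra! hji
    have : a (M (j + 1)) ≤ a (M i) := ha (hM hji)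
    omega
  exact ⟨p, hp.trans_le (by have := hM hij; omega), rfl⟩

theorem lateImages_mem_densityZero (ha : StrictMono a) (hM : StrictMono M)
    (hMa : ∀ k, 2 * k * M k ≤ a (M k)) : lateImages f a M ∈ densityZero := by
  rw [mem_densityZero_iff_eventually_mul_le]
  intro k
  filter_upwards [eventually_gt_atTop (a (M k))] with n hn
  obtain ⟨j, hkj, hjn, hnj⟩ := (ha.monotone.comp hM.monotone).exists_le_lt_and_le_succ hn
    ⟨n, (hM.id_le n).trans ha.le_apply⟩
  have hcard : (lateImages f a M ∩ Iio n).ncard ≤ 2 * M j := calc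
    _ ≤ (f '' Iio (2 * M j)).ncard :=
      ncard_le_ncard (lateImages_inter_Iio_subset ha.monotone hM.monotone hnj)
        ((finite_Iio _).image f)
    _ ≤ (Iio (2 * M j)).ncard := ncard_image_le (finite_Iio _)
    _ = 2 * M j := ncard_Iio_nat _
  calc k * (lateImages f a M ∩ Iio n).ncard ≤ j * (2 * M j) := Nat.mul_le_mul hkj hcard
    _ = 2 * j * M j := by ring
    _ ≤ n := (hMa j).trans hjn.le

theorem exists_subset_range_mem_densityZero_preimage_notMem (ha : StrictMono a)
    (hf : Function.Injective f) (hfa : range f ⊆ range a)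
    (hsparse : ∀ c, ∃ᶠ N in atTop, c * N ≤ a N) :
    ∃ C ⊆ range f, C ∈ densityZero ∧ f ⁻¹' C ∉ densityZero := by
  obtain ⟨M, hM, hMa⟩ := extraction_forall_of_frequently fun k => hsparse (2 * k)
  exact ⟨lateImages f a M, iUnion_subset fun k => inter_subset_left.trans (image_subset_range _ _),
    lateImages_mem_densityZero ha hM hMa, preimage_lateImages_notMem_densityZero ha hf hfa hM⟩

end lateImages

/-- if `A ∈ H(I_d)` and `a` is the increasing enumeration of `A`,
then `a` witnesses `I_d|A ≅ I_d`: for all `X`, `X ∈ I_d ↔ a[X] ∈ I_d`. -/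
theorem stmt_19 (A : Set ℕ) (hA : A ∈ HF densityZero) (a : ℕ → ℕ)
    (hmono : StrictMono a) (hrange : Set.range a = A) :
    ∀ X : Set ℕ, X ∈ densityZero ↔ a '' X ∈ densityZero := by
  intro X
  refine ⟨image_mem_densityZero hmono.id_le, fun haX => by_contra fun hX => ?_⟩
  obtain ⟨f, hbij, hiso⟩ := hA
  have hfA : range f = A := by rw [← image_univ, hbij.image_eq]
  obtain ⟨C, hCf, hC, hfC⟩ := exists_subset_range_mem_densityZero_preimage_notMem hmono
    (injOn_univ.1 hbij.injOn) (hfA.trans hrange.symm).le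
    (frequently_mul_le_of_image_mem_densityZero hmono hX haX)
  have hCA : C ⊆ A := hfA ▸ hCf
  have hdown : ∀ S T : Set ℕ, S ∈ densityZero → T ⊆ S → T ∈ densityZero :=
    fun _ _ => mem_densityZero_of_subset
  have hCiso := hiso C hCA
  rw [mem_restr_iff_of_subset hdown hCA, univ_inter,
    mem_restr_iff_of_subset hdown (subset_univ _)] at hCiso
  exact hfC (hCiso.1 hC)
end
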